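/- Let ε > 0, put z = exp(−1/(2ε)), h_ca = √(1 + 4π²ε²) and h_cs = √((1 + 4π²ε²)·(π²ε² − 2π²ε²·z + (1 + π²ε²)·z²))/(πε·(1+z)). If exp(−1/(2ε)) < 4π²ε² (which holds for all sufficiently small ε > 0), then h_cs < h_ca. Moreover there exists ε₀ > 0 such that h_cs(ε) < h_ca(ε) for all 0 < ε < ε₀. -/

import Mathlib

open Real

/-- The critical amplitude at which the asymmetric solutions disappear. -/
noncomputable def hca (ε : ℝ) : ℝ := Real.sqrt (1 + 4 * Real.pi ^ 2 * ε ^ 2)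

/-- The critical amplitude at which the symmetric solution bifurcates. -/
noncomputable def hcs (ε : ℝ) : ℝ :=
  Real.sqrt ((1 + 4 * Real.pi ^ 2 * ε ^ 2) *
      (Real.pi ^ 2 * ε ^ 2 - 2 * Real.pi ^ 2 * ε ^ 2 * Real.exp (-1 / (2 * ε)) +
        (1 + Real.pi ^ 2 * ε ^ 2) * Real.exp (-1 / (2 * ε)) ^ 2)) /
    (Real.pi * ε * (1 + Real.exp (-1 / (2 * ε))))

/-!
Writing `z = exp (-1 / (2ε))`, the radicand of `hcs` is `hca ε ^ 2 * q` with
`(πε(1 + z))² - q = z (4π²ε² - z)`, so `hcs ε < hca ε` exactly when `z < 4π²ε²`.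
This condition holds for every `ε > 0`: from `exp x ≥ x² / 2` one gets
`exp (-1 / (2ε)) ≤ 8ε² < 4π²ε²`.
-/

lemma sqrt_mul_div_lt_sqrt {a q d : ℝ} (ha : 0 < a) (hd : 0 < d) (h : q < d ^ 2) :
    √(a * q) / d < √a := by
  rw [div_lt_iff₀ hd, sqrt_lt' (by positivity), mul_pow, sq_sqrt ha.le]
  exact mul_lt_mul_of_pos_left h ha

lemma exp_neg_le_two_div_sq {x : ℝ} (hx : 0 < x) : exp (-x) ≤ 2 / x ^ 2 := by
  have hquad : x ^ 2 / 2 ≤ exp x := by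
    simpa using pow_div_factorial_le_exp x hx.le 2
  rw [exp_neg, inv_le_comm₀ (exp_pos x) (by positivity), inv_div]
  exact hquad

lemma exp_neg_one_div_two_mul_lt {ε : ℝ} (hε : 0 < ε) :
    exp (-1 / (2 * ε)) < 4 * π ^ 2 * ε ^ 2 :=
  calc exp (-1 / (2 * ε)) = exp (-(1 / (2 * ε))) := by rw [neg_div]
    _ ≤ 2 / (1 / (2 * ε)) ^ 2 := exp_neg_le_two_div_sq (by positivity)
    _ = 8 * ε ^ 2 := by field_simp; ring
    _ < 4 * π ^ 2 * ε ^ 2 :=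
        mul_lt_mul_of_pos_right (by nlinarith [pi_gt_three]) (pow_pos hε 2)

lemma hcs_lt_hca_of_exp_lt {ε : ℝ} (hε : 0 < ε)
    (hz : exp (-1 / (2 * ε)) < 4 * π ^ 2 * ε ^ 2) : hcs ε < hca ε := by
  set z := exp (-1 / (2 * ε))
  have hz0 : 0 < z := exp_pos _
  have hgap : (π * ε * (1 + z)) ^ 2 -
      (π ^ 2 * ε ^ 2 - 2 * π ^ 2 * ε ^ 2 * z + (1 + π ^ 2 * ε ^ 2) * z ^ 2) =
      z * (4 * π ^ 2 * ε ^ 2 - z) := by ring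
  refine sqrt_mul_div_lt_sqrt (by positivity) (by positivity) ?_
  linarith [mul_pos hz0 (sub_pos.2 hz)]

theorem hcs_lt_hca :
    (∀ ε : ℝ, 0 < ε → Real.exp (-1 / (2 * ε)) < 4 * Real.pi ^ 2 * ε ^ 2 →
      hcs ε < hca ε) ∧
    ∃ ε₀ > (0:ℝ), ∀ ε : ℝ, 0 < ε → ε < ε₀ → hcs ε < hca ε :=
  ⟨fun _ hε hz => hcs_lt_hca_of_exp_lt hε hz,
    1, one_pos, fun _ hε _ => hcs_lt_hca_of_exp_lt hε (exp_neg_one_div_two_mul_lt hε)⟩
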